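/- Let D be an integral domain with quotient field K and let g ∈ D[x] be irreducible as an element of K[x]. If g is image primitive, i.e., d(g) = D, then g is irreducible as an element of Int(D). -/

import Mathlib

set_option linter.unusedSectionVars false

open Polynomial

variable (D : Type*) [CommRing D] [IsDomain D]
variable (K : Type*) [Field K] [Algebra D K] [IsFractionRing D K]

/-- The ring of integer-valued polynomials `Int(D) = {f ∈ K[X] | f(D) ⊆ D}`,
as a subring of `K[X]`. -/
def IntD : Subring (Polynomial K) where
  carrier := {f | ∀ a : D, f.eval (algebraMap D K a) ∈ (algebraMap D K).range}
  zero_mem' := fun a => by rw [eval_zero]; exact zero_mem _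
  one_mem' := fun a => by rw [eval_one]; exact one_mem _
  add_mem' := fun {f g} hf hg a => by rw [eval_add]; exact add_mem (hf a) (hg a)
  mul_mem' := fun {f g} hf hg a => by rw [eval_mul]; exact mul_mem (hf a) (hg a)
  neg_mem' := fun {f} hf a => by rw [eval_neg]; exact neg_mem (hf a)

/-- The fixed divisor `d(g)` of a polynomial `g ∈ D[X]`: the ideal of `D`
generated by the values `g(a)`, `a ∈ D`. -/
def fixDiv (g : Polynomial D) : Ideal D :=
  Ideal.span (Set.range fun a : D => g.eval a)

theorem map_mem_IntD (g : Polynomial D) : g.map (algebraMap D K) ∈ IntD D K :=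
  fun a => ⟨g.eval a, by rw [eval_map, eval₂_at_apply]⟩

/-! A factorisation `g = f h` in `Int(D)` is also one in `K[X]`, so one factor, say `f`, is a
nonzero constant `c`. As `f` is integer-valued, `c = f(0) ∈ D`, and evaluating `g = f h` at any
`a ∈ D` gives `c ∣ g(a)` in `D`. Hence `d(g) ⊆ cD`, so image primitivity makes `c` a unit of `D`,
and then `f` is a unit of `Int(D)`. -/

theorem irreducible_of_map_of_isUnit_of_dvd {M N : Type*} [CommMonoid M] [Monoid N]
    (φ : M →* N) {x : M} (hx : Irreducible (φ x))
    (hunit : ∀ y, y ∣ x → IsUnit (φ y) → IsUnit y) : Irreducible x where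
  not_isUnit hu := hx.not_isUnit (hu.map φ)
  isUnit_or_isUnit {a b} hab :=
    (hx.isUnit_or_isUnit (by rw [hab, map_mul])).imp
      (hunit a (Dvd.intro b hab.symm)) (hunit b (Dvd.intro_left a hab.symm))

section

variable {D K}

theorem fixDiv_le_iff {g : D[X]} {I : Ideal D} : fixDiv D g ≤ I ↔ ∀ a, g.eval a ∈ I := by
  rw [fixDiv, Ideal.span_le, Set.range_subset_iff]
  rfl

theorem isUnit_of_forall_dvd_eval {g : D[X]} (hfd : fixDiv D g = ⊤) {d : D}
    (hd : ∀ a, d ∣ g.eval a) : IsUnit d := by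
  rw [← Ideal.span_singleton_eq_top, eq_top_iff, ← hfd, fixDiv_le_iff]
  exact fun a => Ideal.mem_span_singleton.mpr (hd a)

namespace IntD

noncomputable def mapHom : D[X] →+* IntD D K :=
  (mapRingHom (algebraMap D K)).codRestrict _ (map_mem_IntD D K)

theorem coe_mapHom (g : D[X]) : ((mapHom g : IntD D K) : K[X]) = g.map (algebraMap D K) := rfl

noncomputable def evalHom (a : D) : IntD D K →+* D :=
  (AlgEquiv.ofInjective (Algebra.ofId D K) (IsFractionRing.injective D K)).symm.toRingHom.comp
    (((evalRingHom (algebraMap D K a)).comp (IntD D K).subtype).codRestrict _ fun f => f.2 a)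

theorem algebraMap_evalHom (a : D) (f : IntD D K) :
    algebraMap D K (evalHom a f) = (f : K[X]).eval (algebraMap D K a) :=
  congrArg Subtype.val <|
    (AlgEquiv.ofInjective (Algebra.ofId D K) (IsFractionRing.injective D K)).apply_symm_apply
      ⟨_, f.2 a⟩

theorem evalHom_mapHom (a : D) (g : D[X]) : evalHom (K := K) a (mapHom g) = g.eval a :=
  IsFractionRing.injective D K <| by
    rw [algebraMap_evalHom, coe_mapHom, eval_map, eval₂_at_apply]

theorem isUnit_of_isUnit_coe_of_dvd_mapHom {g : D[X]} (hfd : fixDiv D g = ⊤)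
    {f : IntD D K} (hu : IsUnit (f : K[X])) (hf : f ∣ mapHom g) : IsUnit f := by
  obtain ⟨c, -, hc⟩ := Polynomial.isUnit_iff.mp hu
  have hf_const : f = mapHom (C (evalHom 0 f)) := by
    ext1
    rw [coe_mapHom, map_C, algebraMap_evalHom, ← hc, eval_C]
  have hd : ∀ a, evalHom 0 f ∣ g.eval a := fun a => by
    have := map_dvd (evalHom a) hf
    rwa [hf_const, evalHom_mapHom, evalHom_mapHom, eval_C] at this
  rw [hf_const]
  exact (isUnit_of_forall_dvd_eval hfd hd).map (mapHom.comp C)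

end IntD

end

/-- **Remark.** Let `D` be an integral domain with quotient field `K` and `g ∈ D[X]`
irreducible as an element of `K[X]`. If `g` is image primitive, i.e. `d(g) = D`,
then `g` is irreducible as an element of `Int(D)`. -/
theorem irreducible_in_IntD_of_image_primitive
    (g : Polynomial D) (hg : Irreducible (g.map (algebraMap D K)))
    (hfd : fixDiv D g = ⊤) :
    Irreducible (⟨g.map (algebraMap D K), map_mem_IntD D K g⟩ : IntD D K) :=
  irreducible_of_map_of_isUnit_of_dvd (IntD D K).subtype.toMonoidHom hg
    fun _ hf hu => IntD.isUnit_of_isUnit_coe_of_dvd_mapHom hfd hu hf
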